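/- Let C = {(x:y:z) ∈ ℙ²(ℂ) : x·y·z = 0} be the union of the three coordinate lines, and let p₁, …, pₙ ∈ C. If the stabilizer subgroup {g ∈ SL(3,ℂ) : g·C = C and g·pᵢ = pᵢ for all i} is infinite, then there exists an index j ∈ {1,2,3} such that each pᵢ either lies on the coordinate line {vⱼ = 0} or equals the opposite node eⱼ (the coordinate point whose only nonzero coordinate is the j-th, which is the intersection of the other two coordinate lines). -/
import Mathlib


open Matrix

noncomputable section

/-- The special linear group `SL(3, ℂ)`. -/
abbrev SL3 := Matrix.SpecialLinearGroup (Fin 3) ℂ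

/-- The complex projective plane `ℙ²(ℂ)`. -/
abbrev P2 := Projectivization ℂ (Fin 3 → ℂ)

/-- The action of `SL(3, ℂ)` on `ℙ²(ℂ)` induced by the linear action on `ℂ³`. -/
noncomputable def act (g : SL3) (p : P2) : P2 :=
  Projectivization.map (Matrix.SpecialLinearGroup.toLin' g).toLinearMap
    (Matrix.SpecialLinearGroup.toLin' g).injective p

/-- The union of the three coordinate lines, `{x·y·z = 0}`. -/
def Ctri : Set P2 := {p : P2 | p.rep 0 * p.rep 1 * p.rep 2 = 0}

/-- The coordinate point `e_j` of `ℙ²(ℂ)`, whose only nonzero coordinate is the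
`j`-th one. -/
def coordPt (j : Fin 3) : P2 := Projectivization.mk ℂ (Pi.single j 1) (by
  intro h; simpa using congrFun h j)

-- helper lemmas

lemma rep_smul {v : Fin 3 → ℂ} (hv : v ≠ 0) :
    ∃ a : ℂˣ, (Projectivization.mk ℂ v hv).rep = a • v := by
  obtain ⟨a, ha⟩ := Projectivization.exists_smul_eq_mk_rep ℂ v hv
  exact ⟨a, ha.symm⟩

lemma rep_zero_iff {v : Fin 3 → ℂ} (hv : v ≠ 0) (j : Fin 3) :
    (Projectivization.mk ℂ v hv).rep j = 0 ↔ v j = 0 := by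
  obtain ⟨a, ha⟩ := rep_smul hv
  rw [ha]
  simp [Units.smul_def, Units.ne_zero a]

lemma mk_mem_Ctri {v : Fin 3 → ℂ} (hv : v ≠ 0) :
    Projectivization.mk ℂ v hv ∈ Ctri ↔ v 0 * v 1 * v 2 = 0 := by
  obtain ⟨a, ha⟩ := rep_smul hv
  simp only [Ctri, Set.mem_setOf_eq, ha, Pi.smul_apply, Units.smul_def, smul_eq_mul]
  rw [show ((a:ℂ) * v 0) * ((a:ℂ) * v 1) * ((a:ℂ) * v 2) = ((a:ℂ))^3 * (v 0 * v 1 * v 2) by ring]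
  simp [mul_eq_zero, pow_eq_zero_iff, Units.ne_zero a]

lemma mulVec_ne_zero (g : SL3) {v : Fin 3 → ℂ} (hv : v ≠ 0) :
    (g : Matrix (Fin 3) (Fin 3) ℂ) *ᵥ v ≠ 0 := by
  have h : (Matrix.SpecialLinearGroup.toLin' g) v = (g : Matrix (Fin 3) (Fin 3) ℂ) *ᵥ v := by
    rw [Matrix.SpecialLinearGroup.toLin'_apply, Matrix.toLin'_apply]
  intro h0
  apply hv
  apply (Matrix.SpecialLinearGroup.toLin' g).injective
  rw [h, h0, map_zero]

lemma act_mk (g : SL3) {v : Fin 3 → ℂ} (hv : v ≠ 0) :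
    act g (Projectivization.mk ℂ v hv) =
      Projectivization.mk ℂ ((g : Matrix (Fin 3) (Fin 3) ℂ) *ᵥ v) (mulVec_ne_zero g hv) := by
  unfold act
  rw [Projectivization.map_mk]
  rw [Projectivization.mk_eq_mk_iff']
  refine ⟨1, ?_⟩
  rw [one_smul]
  show (g : Matrix (Fin 3) (Fin 3) ℂ) *ᵥ v = (Matrix.SpecialLinearGroup.toLin' g).toLinearMap v
  rw [LinearEquiv.coe_coe, Matrix.SpecialLinearGroup.toLin'_apply, Matrix.toLin'_apply]



lemma line_lemma (u w : Fin 3 → ℂ)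
    (h : ∀ s : ℂ, (s • u + w) 0 * (s • u + w) 1 * (s • u + w) 2 = 0) :
    ∃ m, u m = 0 ∧ w m = 0 := by
  by_contra hc
  push_neg at hc
  obtain ⟨s, hs⟩ : ∃ s : ℂ, ∀ m : Fin 3, u m ≠ 0 → s * u m + w m ≠ 0 := by
    obtain ⟨s, hs⟩ := Infinite.exists_notMem_finset
      ({-w 0 / u 0, -w 1 / u 1, -w 2 / u 2} : Finset ℂ)
    refine ⟨s, fun m hm hsm => hs ?_⟩
    have hsval : s = -w m / u m := by
      field_simp
      linear_combination hsm
    fin_cases m <;> simp [hsval, Finset.mem_insert]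
  have hprod := h s
  have hterm : ∀ m : Fin 3, (s • u + w) m = s * u m + w m := by
    intro m; simp
  rw [hterm 0, hterm 1, hterm 2] at hprod
  have hex : ∃ m : Fin 3, s * u m + w m = 0 := by
    rcases mul_eq_zero.mp hprod with h2 | h2
    · rcases mul_eq_zero.mp h2 with h3 | h3
      · exact ⟨0, h3⟩
      · exact ⟨1, h3⟩
    · exact ⟨2, h2⟩
  obtain ⟨m, hm⟩ := hex
  have hum : u m = 0 := by
    by_contra hum
    exact hs m hum hm
  have hwm : w m = 0 := by
    rw [hum] at hm; simpa using hm
  exact hc m hum hwm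

lemma eq_coordPt (q : P2) (t : Fin 3) (h : ∀ m, m ≠ t → q.rep m = 0) : q = coordPt t := by
  have ht : q.rep t ≠ 0 := by
    intro h0
    apply q.rep_nonzero
    funext m
    rcases eq_or_ne m t with rfl | hm
    · exact h0
    · exact h m hm
  rw [← Projectivization.mk_rep q, coordPt, Projectivization.mk_eq_mk_iff']
  refine ⟨q.rep t, ?_⟩
  funext m
  rcases eq_or_ne m t with rfl | hm
  · simp [Pi.single_apply]
  · simp [Pi.single_apply, hm, h m hm]

lemma coordPt_rep_zero_iff (t j : Fin 3) : (coordPt t).rep j = 0 ↔ j ≠ t := by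
  rw [coordPt, rep_zero_iff]
  simp [Pi.single_apply]

lemma prod3_eq_zero (f : Fin 3 → ℂ) (j : Fin 3) (h : f j = 0) :
    f 0 * f 1 * f 2 = 0 := by
  fin_cases j <;> simp at h <;> rw [h] <;> ring

lemma monomial (g : SL3) (hg : act g '' Ctri = Ctri) :
    ∃ σ : Equiv.Perm (Fin 3), ∀ i c, i ≠ σ c → (g : Matrix (Fin 3) (Fin 3) ℂ) i c = 0 := by
  have key : ∀ j : Fin 3, ∃ m : Fin 3, ∀ c, c ≠ j → (g : Matrix (Fin 3) (Fin 3) ℂ) m c = 0 := by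
    intro j
    obtain ⟨k, l, hkj, hlj, hkl, hall⟩ :
        ∃ k l : Fin 3, k ≠ j ∧ l ≠ j ∧ k ≠ l ∧ ∀ c : Fin 3, c ≠ j → c = k ∨ c = l := by
      fin_cases j
      · exact ⟨1, 2, by decide, by decide, by decide, by decide⟩
      · exact ⟨0, 2, by decide, by decide, by decide, by decide⟩
      · exact ⟨0, 1, by decide, by decide, by decide, by decide⟩
    have hline : ∀ s : ℂ,
        (s • (fun i => (g : Matrix (Fin 3) (Fin 3) ℂ) i k) + (fun i => (g : Matrix (Fin 3) (Fin 3) ℂ) i l)) 0 *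
        (s • (fun i => (g : Matrix (Fin 3) (Fin 3) ℂ) i k) + (fun i => (g : Matrix (Fin 3) (Fin 3) ℂ) i l)) 1 *
        (s • (fun i => (g : Matrix (Fin 3) (Fin 3) ℂ) i k) + (fun i => (g : Matrix (Fin 3) (Fin 3) ℂ) i l)) 2 = 0 := by
      intro s
      have hx0 : (s • (Pi.single k (1:ℂ) : Fin 3 → ℂ) + (Pi.single l (1:ℂ) : Fin 3 → ℂ)) ≠ 0 := by
        intro h0
        have := congrFun h0 l
        simp [Pi.single_apply, hkl.symm] at this
      have hxj : (s • (Pi.single k (1:ℂ) : Fin 3 → ℂ) + (Pi.single l (1:ℂ) : Fin 3 → ℂ)) j = 0 := by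
        simp [Pi.single_apply, Ne.symm hkj, Ne.symm hlj]
      have hxC : Projectivization.mk ℂ _ hx0 ∈ Ctri := by
        rw [mk_mem_Ctri]
        exact prod3_eq_zero _ j hxj
      have himg : act g (Projectivization.mk ℂ _ hx0) ∈ Ctri := by
        rw [← hg]
        exact Set.mem_image_of_mem _ hxC
      rw [act_mk g hx0, mk_mem_Ctri] at himg
      have hmv : (g : Matrix (Fin 3) (Fin 3) ℂ) *ᵥ (s • (Pi.single k (1:ℂ) : Fin 3 → ℂ) + (Pi.single l (1:ℂ) : Fin 3 → ℂ)) =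
          s • (fun i => (g : Matrix (Fin 3) (Fin 3) ℂ) i k) + (fun i => (g : Matrix (Fin 3) (Fin 3) ℂ) i l) := by
        rw [Matrix.mulVec_add, Matrix.mulVec_smul, Matrix.mulVec_single, Matrix.mulVec_single]
        funext i
        simp
      rwa [hmv] at himg
    obtain ⟨m, hm1, hm2⟩ := line_lemma _ _ hline
    refine ⟨m, fun c hc => ?_⟩
    rcases hall c hc with rfl | rfl
    · exact hm1
    · exact hm2
  choose m hm using key
  have hinj : Function.Injective m := by
    intro j j' hjj
    by_contra hne
    have hrow : ∀ c, (g : Matrix (Fin 3) (Fin 3) ℂ) (m j) c = 0 := by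
      intro c
      rcases eq_or_ne c j with rfl | hcj
      · rw [hjj]
        exact hm j' c (fun h => hne (h ▸ rfl))
      · exact hm j c hcj
    have hdet : (g : Matrix (Fin 3) (Fin 3) ℂ).det = 0 :=
      Matrix.det_eq_zero_of_row_eq_zero (m j) hrow
    rw [g.prop] at hdet
    exact one_ne_zero hdet
  have hbij : Function.Bijective m := Finite.injective_iff_bijective.mp hinj
  refine ⟨Equiv.ofBijective m hbij, fun i c hic => ?_⟩
  have h1 : m ((Equiv.ofBijective m hbij).symm i) = i :=
    (Equiv.ofBijective m hbij).apply_symm_apply i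
  have h2 : c ≠ (Equiv.ofBijective m hbij).symm i := by
    intro hcj
    apply hic
    rw [hcj]
    exact h1.symm
  have := hm ((Equiv.ofBijective m hbij).symm i) c h2
  rwa [h1] at this

lemma sigma_fix (g : SL3) (σ : Equiv.Perm (Fin 3))
    (hσ : ∀ i c, i ≠ σ c → (g : Matrix (Fin 3) (Fin 3) ℂ) i c = 0)
    {v : Fin 3 → ℂ} (hv : v ≠ 0) (k : Fin 3) (hk : v k = 0)
    (hnk : ∀ m, m ≠ k → v m ≠ 0)
    (hfix : ∃ a : ℂ, a • v = (g : Matrix (Fin 3) (Fin 3) ℂ) *ᵥ v) : σ k = k := by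
  obtain ⟨a, ha⟩ := hfix
  have h0 : ((g : Matrix (Fin 3) (Fin 3) ℂ) *ᵥ v) (σ k) = 0 := by
    simp only [Matrix.mulVec, dotProduct]
    apply Finset.sum_eq_zero
    intro c _
    rcases eq_or_ne c k with rfl | hck
    · rw [hk, mul_zero]
    · rw [hσ (σ k) c (fun h => hck (σ.injective h).symm), zero_mul]
  rw [← ha] at h0
  by_contra hne
  have hva : a ≠ 0 := by
    intro h0a
    apply mulVec_ne_zero g hv
    rw [← ha, h0a, zero_smul]
  have hvs := hnk (σ k) hne
  simp only [Pi.smul_apply, smul_eq_mul, mul_eq_zero] at h0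
  tauto

lemma diag_vals (g : SL3) (hdiag : ∀ i c : Fin 3, i ≠ c → (g : Matrix (Fin 3) (Fin 3) ℂ) i c = 0)
    {v : Fin 3 → ℂ} (k : Fin 3) (hnk : ∀ m, m ≠ k → v m ≠ 0)
    (a : ℂ) (ha : a • v = (g : Matrix (Fin 3) (Fin 3) ℂ) *ᵥ v) :
    ∀ m, m ≠ k → (g : Matrix (Fin 3) (Fin 3) ℂ) m m = a := by
  intro m hm
  have h1 : ((g : Matrix (Fin 3) (Fin 3) ℂ) *ᵥ v) m = (g : Matrix (Fin 3) (Fin 3) ℂ) m m * v m := by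
    simp only [Matrix.mulVec, dotProduct]
    apply Finset.sum_eq_single m
    · intro b _ hbm
      rw [hdiag m b (Ne.symm hbm), zero_mul]
    · intro hmem
      exact absurd (Finset.mem_univ m) hmem
  have h2 : a * v m = (g : Matrix (Fin 3) (Fin 3) ℂ) m m * v m := by
    rw [← h1, ← ha]; simp
  exact (mul_right_cancel₀ (hnk m hm) h2.symm)

lemma scalar_of_fix_two (g : SL3) (hg : act g '' Ctri = Ctri)
    (q q' : P2) (k k' : Fin 3) (hkk' : k ≠ k')
    (hk : q.rep k = 0) (hnk : ∀ m, m ≠ k → q.rep m ≠ 0)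
    (hk' : q'.rep k' = 0) (hnk' : ∀ m, m ≠ k' → q'.rep m ≠ 0)
    (hfq : act g q = q) (hfq' : act g q' = q') :
    ∃ ω : ℂ, ω ^ 3 = 1 ∧ (g : Matrix (Fin 3) (Fin 3) ℂ) = ω • (1 : Matrix (Fin 3) (Fin 3) ℂ) := by
  obtain ⟨σ, hσ⟩ := monomial g hg
  have hfix : ∀ r : P2, act g r = r →
      ∃ a : ℂ, a • r.rep = (g : Matrix (Fin 3) (Fin 3) ℂ) *ᵥ r.rep := by
    intro r hr
    have h1 : act g (Projectivization.mk ℂ r.rep r.rep_nonzero) = r := by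
      rw [Projectivization.mk_rep]; exact hr
    rw [act_mk g r.rep_nonzero] at h1
    conv_rhs at h1 => rw [← Projectivization.mk_rep r]
    rw [Projectivization.mk_eq_mk_iff'] at h1
    obtain ⟨a, ha⟩ := h1
    exact ⟨a, ha⟩
  have hfk : σ k = k :=
    sigma_fix g σ hσ q.rep_nonzero k hk hnk (hfix q hfq)
  have hfk' : σ k' = k' :=
    sigma_fix g σ hσ q'.rep_nonzero k' hk' hnk' (hfix q' hfq')
  have hσ1 : ∀ c, σ c = c := by
    intro c
    rcases eq_or_ne c k with rfl | h1
    · exact hfk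
    rcases eq_or_ne c k' with rfl | h2
    · exact hfk'
    have hs1 : σ c ≠ k := fun h => h1 (σ.injective (h.trans hfk.symm))
    have hs2 : σ c ≠ k' := fun h => h2 (σ.injective (h.trans hfk'.symm))
    exact (by decide : ∀ k k' x y : Fin 3, k ≠ k' → x ≠ k → x ≠ k' → y ≠ k → y ≠ k' → x = y)
      k k' (σ c) c hkk' hs1 hs2 h1 h2
  have hdiag : ∀ i c : Fin 3, i ≠ c → (g : Matrix (Fin 3) (Fin 3) ℂ) i c = 0 := by
    intro i c h
    exact hσ i c (by rw [hσ1 c]; exact h)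
  obtain ⟨a, ha⟩ := hfix q hfq
  obtain ⟨b, hb⟩ := hfix q' hfq'
  have hda := diag_vals g hdiag k hnk a ha
  have hdb := diag_vals g hdiag k' hnk' b hb
  obtain ⟨m0, hm0k, hm0k'⟩ : ∃ m0 : Fin 3, m0 ≠ k ∧ m0 ≠ k' :=
    (by decide : ∀ k k' : Fin 3, ∃ m0, m0 ≠ k ∧ m0 ≠ k') k k'
  have hab : a = b := by rw [← hda m0 hm0k, hdb m0 hm0k']
  have hall : ∀ m : Fin 3, (g : Matrix (Fin 3) (Fin 3) ℂ) m m = a := by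
    intro m
    rcases eq_or_ne m k with rfl | hm
    · rw [hdb m hkk']
      exact hab.symm
    · exact hda m hm
  have hmat : (g : Matrix (Fin 3) (Fin 3) ℂ) = a • (1 : Matrix (Fin 3) (Fin 3) ℂ) := by
    ext i j
    rcases eq_or_ne i j with rfl | h
    · rw [hall i]; simp [Matrix.one_apply]
    · rw [hdiag i j h]; simp [Matrix.one_apply, h]
  have hdet : a ^ 3 = 1 := by
    have hd := g.prop
    rw [hmat, Matrix.det_smul, Matrix.det_one, mul_one] at hd
    simpa using hd
  exact ⟨a, hdet, hmat⟩

/-- If marked points on the triangle of coordinate lines have infinite `SL(3,ℂ)`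
stabilizer, then there is an index `j` such that every marked point lies on the
coordinate line `{v_j = 0}` or equals the opposite node `e_j`. -/
theorem triangle_stabilizer (n : ℕ) (p : Fin n → P2)
    (hp : ∀ i, p i ∈ Ctri)
    (hstab : {g : SL3 | act g '' Ctri = Ctri ∧ ∀ i, act g (p i) = p i}.Infinite) :
    ∃ j : Fin 3, ∀ i, (p i).rep j = 0 ∨ p i = coordPt j := by
  by_contra hcon
  push_neg at hcon
  have hwit : ∀ j : Fin 3, ∃ q : P2,
      (∀ g : SL3, g ∈ {g : SL3 | act g '' Ctri = Ctri ∧ ∀ i, act g (p i) = p i} → act g q = q) ∧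
      ∃ k : Fin 3, k ≠ j ∧ q.rep k = 0 ∧ ∀ m, m ≠ k → q.rep m ≠ 0 := by
    intro j
    obtain ⟨i, hrep, hne⟩ := hcon j
    refine ⟨p i, fun g hg => hg.2 i, ?_⟩
    have hprod : (p i).rep 0 * (p i).rep 1 * (p i).rep 2 = 0 := hp i
    obtain ⟨k, hk0⟩ : ∃ k : Fin 3, (p i).rep k = 0 := by
      rcases mul_eq_zero.mp hprod with h2 | h2
      · rcases mul_eq_zero.mp h2 with h3 | h3
        exacts [⟨0, h3⟩, ⟨1, h3⟩]
      · exact ⟨2, h2⟩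
    have hkj : k ≠ j := fun h => hrep (h ▸ hk0)
    refine ⟨k, hkj, hk0, fun m hm hm0 => ?_⟩
    obtain ⟨t, ht⟩ : ∃ t : Fin 3, ∀ r : Fin 3, r ≠ t → (r = k ∨ r = m) :=
      (by decide : ∀ k m : Fin 3, m ≠ k → ∃ t, ∀ r, r ≠ t → (r = k ∨ r = m)) k m hm
    have hqc : p i = coordPt t := by
      apply eq_coordPt _ t
      intro r hr
      rcases ht r hr with rfl | rfl
      · exact hk0
      · exact hm0
    have hjt : j = t := by
      by_contra hjt
      have hz : (coordPt t).rep j = 0 := (coordPt_rep_zero_iff t j).mpr hjt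
      rw [← hqc] at hz
      exact hrep hz
    exact hne (hjt ▸ hqc)
  obtain ⟨qa, qafix, ka, hka, hka0, hkan⟩ := hwit 0
  obtain ⟨qb, qbfix, kb, hkb, hkb0, hkbn⟩ := hwit 1
  obtain ⟨qc, qcfix, kc, hkc, hkc0, hkcn⟩ := hwit 2
  obtain ⟨q, q', k, k', hkk', qfix, q'fix, hqk, hqn, hq'k, hq'n⟩ :
      ∃ (q q' : P2) (k k' : Fin 3), k ≠ k' ∧
        (∀ g : SL3, g ∈ {g : SL3 | act g '' Ctri = Ctri ∧ ∀ i, act g (p i) = p i} → act g q = q) ∧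
        (∀ g : SL3, g ∈ {g : SL3 | act g '' Ctri = Ctri ∧ ∀ i, act g (p i) = p i} → act g q' = q') ∧
        q.rep k = 0 ∧ (∀ m, m ≠ k → q.rep m ≠ 0) ∧
        q'.rep k' = 0 ∧ (∀ m, m ≠ k' → q'.rep m ≠ 0) := by
    rcases eq_or_ne ka kb with heq | hne
    · have hka2 : ka = 2 :=
        (by decide : ∀ x : Fin 3, x ≠ 0 → x ≠ 1 → x = 2) ka hka (heq ▸ hkb)
      have : ka ≠ kc := by rw [hka2]; exact Ne.symm hkc
      exact ⟨qa, qc, ka, kc, this, qafix, qcfix, hka0, hkan, hkc0, hkcn⟩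
    · exact ⟨qa, qb, ka, kb, hne, qafix, qbfix, hka0, hkan, hkb0, hkbn⟩
  set S := {g : SL3 | act g '' Ctri = Ctri ∧ ∀ i, act g (p i) = p i} with hS
  have hscal : ∀ g ∈ S, ∃ ω : ℂ, ω ^ 3 = 1 ∧
      (g : Matrix (Fin 3) (Fin 3) ℂ) = ω • (1 : Matrix (Fin 3) (Fin 3) ℂ) := by
    intro g hg
    exact scalar_of_fix_two g hg.1 q q' k k' hkk' hqk hqn hq'k hq'n (qfix g hg) (q'fix g hg)
  have hfinroots : Set.Finite {x : ℂ | x ^ 3 = 1} := by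
    have hpne : (Polynomial.X ^ 3 - Polynomial.C 1 : Polynomial ℂ) ≠ 0 :=
      Polynomial.X_pow_sub_C_ne_zero (by norm_num) 1
    apply (Polynomial.finite_setOf_isRoot hpne).subset
    intro x hx
    simp only [Set.mem_setOf_eq, Polynomial.IsRoot, Polynomial.eval_sub, Polynomial.eval_pow,
      Polynomial.eval_X, Polynomial.eval_C]
    rw [hx]; ring
  have hfinS : S.Finite := by
    apply Set.Finite.of_finite_image (f := fun g : SL3 => (g : Matrix (Fin 3) (Fin 3) ℂ) 0 0)
    · apply hfinroots.subset
      rintro _ ⟨g, hg, rfl⟩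
      obtain ⟨ω, hω3, hωm⟩ := hscal g hg
      have he : (g : Matrix (Fin 3) (Fin 3) ℂ) 0 0 = ω := by
        rw [hωm]; simp [Matrix.one_apply]
      simp only [Set.mem_setOf_eq, he, hω3]
    · intro g hg g' hg' he
      obtain ⟨ω, _, hm⟩ := hscal g hg
      obtain ⟨ω', _, hm'⟩ := hscal g' hg'
      have e1 : (g : Matrix (Fin 3) (Fin 3) ℂ) 0 0 = ω := by rw [hm]; simp [Matrix.one_apply]
      have e2 : (g' : Matrix (Fin 3) (Fin 3) ℂ) 0 0 = ω' := by rw [hm']; simp [Matrix.one_apply]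
      have hωe : ω = ω' := by rw [← e1, ← e2]; exact he
      apply Subtype.ext
      rw [hm, hm', hωe]
  exact hstab hfinS
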